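/- arXiv:1509.03668 — 6 statements merged into one kernel-verified Lean document; each statement's English description precedes it below -/
import Mathlib

section
/- Let μ and ν be compactly supported Borel probability measures on ℝ^d and let c : ℝ^d × ℝ^d → ℝ be continuous. For h > 0 let μ^h and ν^h be the discretized measures of μ and ν on the grid hℤ^d. Let (h_k) be a sequence of positive reals tending to 0, and for each k let π_k be an optimal coupling of μ^{h_k} and ν^{h_k} for the cost c (this is a finite-dimensional linear program since μ^{h_k} and ν^{h_k} are finitely supported). Then there exists a subsequence of (π_k) converging weakly to a probability measure π which is an optimal coupling of μ and ν for the cost c. -/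
open MeasureTheory Filter Topology

noncomputable section

/-- Weak convergence of a sequence of measures: the integrals of every bounded
continuous function converge. -/
def WeakConvSeq {α : Type*} [MeasurableSpace α] [TopologicalSpace α]
    (μs : ℕ → Measure α) (μ : Measure α) : Prop :=
  ∀ f : BoundedContinuousFunction α ℝ,
    Tendsto (fun k => ∫ x, f x ∂(μs k)) atTop (𝓝 (∫ x, f x ∂μ))

/-- A coupling (transference plan) of `μ` and `ν`: a measure on the product
whose marginals are `μ` and `ν`. -/
def IsCoupling {α β : Type*} [MeasurableSpace α] [MeasurableSpace β]
    (π : Measure (α × β)) (μ : Measure α) (ν : Measure β) : Prop :=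
  π.map Prod.fst = μ ∧ π.map Prod.snd = ν

/-- An optimal coupling of `μ` and `ν` for the cost `c`. -/
def IsOptimalCoupling {α β : Type*} [MeasurableSpace α] [MeasurableSpace β]
    (c : α × β → ℝ) (π : Measure (α × β)) (μ : Measure α) (ν : Measure β) : Prop :=
  IsCoupling π μ ν ∧
    ∀ π' : Measure (α × β), IsCoupling π' μ ν → ∫ q, c q ∂π ≤ ∫ q, c q ∂π'

/-- The grid point `z = h·m` of the grid `hℤ^d`. -/
def gridPoint (d : ℕ) (h : ℝ) (m : Fin d → ℤ) : Fin d → ℝ :=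
  fun i => h * m i

/-- The half-open axis-aligned cube `R_h(z) = z + [-h/2, h/2)^d` of side length `h`
centered at the grid point `z = h·m`.  These cubes partition `ℝ^d`. -/
def gridCube (d : ℕ) (h : ℝ) (m : Fin d → ℤ) : Set (Fin d → ℝ) :=
  {x | ∀ i, h * m i - h / 2 ≤ x i ∧ x i < h * m i + h / 2}

/-- The discretized measure `μ^h = Σ_{z ∈ hℤ^d} μ(R_h(z)) δ_z`. -/
def discretize {d : ℕ} (h : ℝ) (μ : Measure (Fin d → ℝ)) : Measure (Fin d → ℝ) :=
  Measure.sum fun m : Fin d → ℤ =>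
    μ (gridCube d h m) • Measure.dirac (gridPoint d h m)

/-! Rounding to the grid moves a point by at most `h / 2`, so for `h ≤ H` all discretized
measures, and hence all their couplings, live on one compact set `Q`. Prokhorov's theorem then
yields a weakly convergent subsequence of the optimal plans, and its limit `π` couples `μ` and `ν`
because `μ^h → μ` and `ν^h → ν` weakly. For a competitor `π'`, rounding both coordinates gives
couplings of `μ^h` and `ν^h` converging weakly to `π'`. On `Q` the cost agrees with a bounded
continuous function, so both sides of `∫ c dπₖ ≤ ∫ c dπ'ₖ` pass to the limit. -/

open Set Metric TopologicalSpace
open scoped NNReal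

section Measures

variable {X Y : Type*} [MeasurableSpace X] [MeasurableSpace Y]
  {π : Measure (X × Y)} {μ : Measure X} {ν : Measure Y}

lemma measure_map_compl_eq_zero_of_mapsTo {Z : Type*} [MeasurableSpace Z] {f : X → Z}
    (hf : Measurable f) {K : Set X} {L : Set Z} (hL : MeasurableSet L) (hKL : MapsTo f K L)
    (hK : μ Kᶜ = 0) : μ.map f Lᶜ = 0 := by
  rw [Measure.map_apply hf hL.compl]
  exact measure_mono_null (fun x hx hxK => hx (hKL hxK)) hK

lemma integral_eq_of_eqOn {Q : Set X} (hμ : μ Qᶜ = 0) {f g : X → ℝ} (hfg : EqOn f g Q) :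
    ∫ x, f x ∂μ = ∫ x, g x ∂μ :=
  integral_congr_ae (measure_mono_null (fun _ hx hxQ => hx (hfg hxQ)) hμ)

lemma IsCoupling.isProbabilityMeasure (h : IsCoupling π μ ν) [IsProbabilityMeasure μ] :
    IsProbabilityMeasure π :=
  have : IsProbabilityMeasure (π.map Prod.fst) := h.1 ▸ inferInstance
  Measure.isProbabilityMeasure_of_map Prod.fst

lemma IsCoupling.measure_compl_prod_eq_zero (h : IsCoupling π μ ν) {A : Set X} {B : Set Y}
    (hA : MeasurableSet A) (hB : MeasurableSet B) (hμA : μ Aᶜ = 0) (hνB : ν Bᶜ = 0) :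
    π (A ×ˢ B)ᶜ = 0 := by
  rw [compl_prod_eq_union, prod_univ, univ_prod]
  refine measure_union_null ?_ ?_
  · rwa [← Measure.map_apply measurable_fst hA.compl, h.1]
  · rwa [← Measure.map_apply measurable_snd hB.compl, h.2]

lemma IsCoupling.map_prodMap {X' Y' : Type*} [MeasurableSpace X'] [MeasurableSpace Y']
    (h : IsCoupling π μ ν) {f : X → X'} {g : Y → Y'} (hf : Measurable f) (hg : Measurable g) :
    IsCoupling (π.map (Prod.map f g)) (μ.map f) (ν.map g) := by
  constructor
  · rw [Measure.map_map measurable_fst (hf.prodMap hg), ← h.1,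
      Measure.map_map hf measurable_fst]
    rfl
  · rw [Measure.map_map measurable_snd (hf.prodMap hg), ← h.2,
      Measure.map_map hg measurable_snd]
    rfl

end Measures

lemma exists_boundedContinuousFunction_eqOn {X : Type*} [TopologicalSpace X] {c : X → ℝ}
    (hc : Continuous c) {Q : Set X} (hQ : IsCompact Q) :
    ∃ g : BoundedContinuousFunction X ℝ, EqOn g c Q := by
  obtain ⟨M, hM⟩ := hQ.exists_bound_of_continuousOn hc.continuousOn
  refine ⟨.ofNormedAddCommGroup (fun x => max (-|M|) (min |M| (c x))) (by fun_prop) |M|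
    fun x => ?_, fun x hx => ?_⟩
  · rw [Real.norm_eq_abs, abs_le]
    exact ⟨le_max_left _ _, max_le (by linarith [abs_nonneg M]) (min_le_left _ _)⟩
  · have := abs_le.1 ((Real.norm_eq_abs _ ▸ hM x hx).trans (le_abs_self M))
    simp [this.1, this.2]

namespace MeasureTheory.ProbabilityMeasure

section Convergence

variable {X : Type*} [TopologicalSpace X] [MeasurableSpace X] [OpensMeasurableSpace X]

lemma tendsto_integral_of_measure_compl_eq_zero {ι : Type*} {l : Filter ι}
    {ρs : ι → ProbabilityMeasure X} {ρ : ProbabilityMeasure X} (hlim : Tendsto ρs l (𝓝 ρ))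
    {Q : Set X} (hQ : IsCompact Q) (hρs : ∀ i, (ρs i : Measure X) Qᶜ = 0)
    (hρ : (ρ : Measure X) Qᶜ = 0) {c : X → ℝ} (hc : Continuous c) :
    Tendsto (fun i => ∫ x, c x ∂(ρs i : Measure X)) l (𝓝 (∫ x, c x ∂(ρ : Measure X))) := by
  obtain ⟨g, hg⟩ := exists_boundedContinuousFunction_eqOn hc hQ
  simp only [← integral_eq_of_eqOn (hρs _) hg, ← integral_eq_of_eqOn hρ hg]
  exact tendsto_iff_forall_integral_tendsto.1 hlim g

lemma tendsto_map_of_tendsto_id (ρ : ProbabilityMeasure X) {T : ℕ → X → X}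
    (hT : ∀ k, Measurable (T k)) (hTx : ∀ x, Tendsto (fun k => T k x) atTop (𝓝 x)) :
    Tendsto (fun k => ρ.map (hT k).aemeasurable) atTop (𝓝 ρ) := by
  refine tendsto_iff_forall_integral_tendsto.2 fun f => ?_
  simp only [toMeasure_map, integral_map (hT _).aemeasurable f.continuous.aestronglyMeasurable]
  exact tendsto_integral_of_dominated_convergence (fun _ => ‖f‖)
    (fun k => (f.continuous.measurable.comp (hT k)).aestronglyMeasurable) (integrable_const _)
    (fun k => .of_forall fun x => f.norm_coe_le_norm _)
    (.of_forall fun x => (f.continuous.tendsto x).comp (hTx x))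

variable {Y : Type*} [TopologicalSpace Y] [MeasurableSpace Y] [BorelSpace Y]
  [HasOuterApproxClosed Y]

lemma map_eq_of_tendsto {ι : Type*} {l : Filter ι} [l.NeBot] {f : X → Y} (hf : Continuous f)
    {ρs : ι → ProbabilityMeasure X} {ρ : ProbabilityMeasure X}
    {σs : ι → ProbabilityMeasure Y} {σ : ProbabilityMeasure Y}
    (hmap : ∀ i, (ρs i : Measure X).map f = σs i) (hρ : Tendsto ρs l (𝓝 ρ))
    (hσ : Tendsto σs l (𝓝 σ)) : (ρ : Measure X).map f = σ := by
  have hmap' : ∀ i, (ρs i).map hf.measurable.aemeasurable = σs i := fun i =>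
    toMeasure_injective (hmap i)
  have := tendsto_map_of_tendsto_of_continuous _ _ hρ hf
  simp only [hmap'] at this
  exact congrArg toMeasure (tendsto_nhds_unique this hσ)

end Convergence

section Prokhorov

variable {X : Type*} [TopologicalSpace X] [T2Space X] [MeasurableSpace X] [BorelSpace X]

lemma isCompact_setOf_measure_compl_eq_zero {Q : Set X} (hQ : IsCompact Q) :
    IsCompact {ρ : ProbabilityMeasure X | (ρ : Measure X) Qᶜ = 0} := by
  obtain ⟨u, -, -, hu⟩ := exists_seq_strictAnti_tendsto (0 : ℝ≥0)
  convert isCompact_setOfPred_probabilityMeasure_mass_eq_compl_isCompact_le hu (fun _ => hQ)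
    (.inr monotone_const) using 1
  ext ρ
  rw [mem_ofPred_eq, ← ennreal_coeFn_eq_coeFn_toMeasure, ENNReal.coe_eq_zero]
  exact ⟨fun h n => h ▸ zero_le, fun h => le_antisymm (ge_of_tendsto' hu h) zero_le⟩

lemma exists_subseq_tendsto_of_measure_compl_eq_zero
    [PseudoMetrizableSpace X] [SeparableSpace X] {Q : Set X} (hQ : IsCompact Q)
    (ρs : ℕ → ProbabilityMeasure X) (hρs : ∀ k, (ρs k : Measure X) Qᶜ = 0) :
    ∃ ρ : ProbabilityMeasure X, (ρ : Measure X) Qᶜ = 0 ∧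
      ∃ φ : ℕ → ℕ, StrictMono φ ∧ Tendsto (ρs ∘ φ) atTop (𝓝 ρ) :=
  (isCompact_setOf_measure_compl_eq_zero hQ).tendsto_subseq hρs

end Prokhorov

end MeasureTheory.ProbabilityMeasure

lemma IsCoupling.of_tendsto {X Y : Type*} [TopologicalSpace X] [MeasurableSpace X] [BorelSpace X]
    [HasOuterApproxClosed X] [TopologicalSpace Y] [MeasurableSpace Y] [BorelSpace Y]
    [HasOuterApproxClosed Y] [OpensMeasurableSpace (X × Y)] {ι : Type*} {l : Filter ι} [l.NeBot]
    {πs : ι → ProbabilityMeasure (X × Y)} {μs : ι → ProbabilityMeasure X}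
    {νs : ι → ProbabilityMeasure Y} {π : ProbabilityMeasure (X × Y)} {μ : ProbabilityMeasure X}
    {ν : ProbabilityMeasure Y} (hπ : Tendsto πs l (𝓝 π)) (hμ : Tendsto μs l (𝓝 μ))
    (hν : Tendsto νs l (𝓝 ν)) (h : ∀ i, IsCoupling (πs i : Measure (X × Y)) (μs i) (νs i)) :
    IsCoupling (π : Measure (X × Y)) μ ν :=
  ⟨ProbabilityMeasure.map_eq_of_tendsto continuous_fst (fun i => (h i).1) hπ hμ,
    ProbabilityMeasure.map_eq_of_tendsto continuous_snd (fun i => (h i).2) hπ hν⟩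


section GridRounding

variable {d : ℕ} {h : ℝ}

/-- `gridCube d h m` is the fibre of `gridIndex h` over `m`, which makes `μ^h` the push-forward
of `μ` under rounding to the nearest grid point, `gridRound h`. -/
def gridIndex (h : ℝ) (x : Fin d → ℝ) : Fin d → ℤ := fun i => ⌊(x i + h / 2) / h⌋

def gridRound (h : ℝ) : (Fin d → ℝ) → Fin d → ℝ := gridPoint d h ∘ gridIndex h

lemma mem_gridCube_iff (hh : 0 < h) {x : Fin d → ℝ} {m : Fin d → ℤ} :
    x ∈ gridCube d h m ↔ gridIndex h x = m := by
  simp only [gridCube, mem_ofPred_eq, gridIndex, funext_iff, Int.floor_eq_iff,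
    le_div_iff₀ hh, div_lt_iff₀ hh]
  refine forall_congr' fun i => ?_
  constructor <;> rintro ⟨h₁, h₂⟩ <;> constructor <;> linarith

lemma measurable_gridIndex (h : ℝ) : Measurable (gridIndex (d := d) h) :=
  measurable_pi_lambda _ fun i =>
    (((measurable_pi_apply i).add_const _).div_const _).floor

lemma measurable_gridPoint (h : ℝ) : Measurable (gridPoint d h) :=
  measurable_pi_lambda _ fun i =>
    measurable_const.mul (Measurable.of_discrete.comp (measurable_pi_apply i))

lemma measurable_gridRound (h : ℝ) : Measurable (gridRound (d := d) h) :=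
  (measurable_gridPoint h).comp (measurable_gridIndex h)

lemma discretize_eq_map (hh : 0 < h) (μ : Measure (Fin d → ℝ)) :
    discretize h μ = μ.map (gridRound h) := by
  rw [gridRound, ← Measure.map_map (measurable_gridPoint h) (measurable_gridIndex h),
    Measure.map_eq_sum μ _ (measurable_gridIndex h),
    Measure.map_sum (measurable_gridPoint h).aemeasurable, discretize]
  congr 1 with m : 1
  rw [Measure.map_smul, Measure.map_dirac' (measurable_gridPoint h)]
  congr 2 with x
  exact mem_gridCube_iff hh

lemma dist_gridRound_le (hh : 0 < h) (x : Fin d → ℝ) : dist (gridRound h x) x ≤ h / 2 := by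
  refine (dist_pi_le_iff (by positivity)).2 fun i => ?_
  have h₁ := Int.floor_le ((x i + h / 2) / h)
  have h₂ := Int.lt_floor_add_one ((x i + h / 2) / h)
  rw [le_div_iff₀ hh] at h₁
  rw [div_lt_iff₀ hh] at h₂
  rw [Real.dist_eq, abs_le]
  simp only [gridRound, Function.comp_apply, gridPoint, gridIndex]
  constructor <;> nlinarith

lemma tendsto_gridRound {ι : Type*} {l : Filter ι} {hs : ι → ℝ} (hspos : ∀ i, 0 < hs i)
    (hslim : Tendsto hs l (𝓝 0)) (x : Fin d → ℝ) :
    Tendsto (fun i => gridRound (hs i) x) l (𝓝 x) := by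
  refine tendsto_iff_dist_tendsto_zero.2 <|
    squeeze_zero (fun _ => dist_nonneg) (fun i => dist_gridRound_le (hspos i) x) ?_
  simpa using hslim.div_const 2

lemma discretize_compl_cthickening_eq_zero (hh : 0 < h) {δ : ℝ} (hδ : h / 2 ≤ δ)
    {μ : Measure (Fin d → ℝ)} {K : Set (Fin d → ℝ)} (hK : μ Kᶜ = 0) :
    discretize h μ (cthickening δ K)ᶜ = 0 := by
  rw [discretize_eq_map hh]
  refine measure_map_compl_eq_zero_of_mapsTo (measurable_gridRound h)
    isClosed_cthickening.measurableSet (fun x hx => ?_) hK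
  exact mem_cthickening_of_dist_le _ x _ _ hx ((dist_gridRound_le hh x).trans hδ)

lemma IsCoupling.measure_compl_cthickening_prod_eq_zero_of_discretize
    {π : Measure ((Fin d → ℝ) × (Fin d → ℝ))} {μ ν : Measure (Fin d → ℝ)}
    (hπ : IsCoupling π (discretize h μ) (discretize h ν)) (hh : 0 < h) {δ : ℝ} (hδ : h / 2 ≤ δ)
    {K L : Set (Fin d → ℝ)} (hK : μ Kᶜ = 0) (hL : ν Lᶜ = 0) :
    π (cthickening δ K ×ˢ cthickening δ L)ᶜ = 0 :=
  hπ.measure_compl_prod_eq_zero isClosed_cthickening.measurableSet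
    isClosed_cthickening.measurableSet (discretize_compl_cthickening_eq_zero hh hδ hK)
    (discretize_compl_cthickening_eq_zero hh hδ hL)

lemma IsCoupling.discretize {π : Measure ((Fin d → ℝ) × (Fin d → ℝ))}
    {μ ν : Measure (Fin d → ℝ)} (hπ : IsCoupling π μ ν) (hh : 0 < h) :
    IsCoupling (π.map (Prod.map (gridRound h) (gridRound h))) (discretize h μ)
      (discretize h ν) := by
  rw [discretize_eq_map hh, discretize_eq_map hh]
  exact hπ.map_prodMap (measurable_gridRound h) (measurable_gridRound h)

lemma MeasureTheory.ProbabilityMeasure.tendsto_map_gridRound {hs : ℕ → ℝ}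
    (hspos : ∀ k, 0 < hs k) (hslim : Tendsto hs atTop (𝓝 0)) (ρ : ProbabilityMeasure (Fin d → ℝ)) :
    Tendsto (fun k => ρ.map (measurable_gridRound (hs k)).aemeasurable) atTop (𝓝 ρ) :=
  ρ.tendsto_map_of_tendsto_id (fun k => measurable_gridRound (hs k)) (tendsto_gridRound hspos hslim)

lemma MeasureTheory.ProbabilityMeasure.tendsto_map_prodMap_gridRound {hs : ℕ → ℝ}
    (hspos : ∀ k, 0 < hs k) (hslim : Tendsto hs atTop (𝓝 0))
    (ρ : ProbabilityMeasure ((Fin d → ℝ) × (Fin d → ℝ))) :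
    Tendsto (fun k => ρ.map ((measurable_gridRound (hs k)).prodMap
      (measurable_gridRound (hs k))).aemeasurable) atTop (𝓝 ρ) :=
  ρ.tendsto_map_of_tendsto_id (fun k => (measurable_gridRound (hs k)).prodMap
      (measurable_gridRound (hs k))) fun q =>
    (tendsto_gridRound hspos hslim q.1).prodMk_nhds (tendsto_gridRound hspos hslim q.2)

end GridRounding

/-- Convergence of the linear programming approximation: if `π_k` is an optimal
coupling of the discretized measures `μ^{h_k}` and `ν^{h_k}` for a continuous
cost `c`, where `h_k → 0`, then a subsequence of `π_k` converges weakly to an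
optimal coupling of `μ` and `ν` for the cost `c`. -/
theorem convergence_of_LP_solutions
    {d : ℕ} (μ ν : Measure (Fin d → ℝ))
    (hμ : IsProbabilityMeasure μ) (hν : IsProbabilityMeasure ν)
    (hμcompact : ∃ K : Set (Fin d → ℝ), IsCompact K ∧ μ Kᶜ = 0)
    (hνcompact : ∃ K : Set (Fin d → ℝ), IsCompact K ∧ ν Kᶜ = 0)
    (c : (Fin d → ℝ) × (Fin d → ℝ) → ℝ) (hc : Continuous c)
    (hs : ℕ → ℝ) (hspos : ∀ k, 0 < hs k) (hslim : Tendsto hs atTop (𝓝 0))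
    (πs : ℕ → Measure ((Fin d → ℝ) × (Fin d → ℝ)))
    (hπs : ∀ k, IsOptimalCoupling c (πs k) (discretize (hs k) μ) (discretize (hs k) ν)) :
    ∃ (φ : ℕ → ℕ) (π : Measure ((Fin d → ℝ) × (Fin d → ℝ))), StrictMono φ ∧
      IsProbabilityMeasure π ∧
      WeakConvSeq (fun k => πs (φ k)) π ∧
      IsOptimalCoupling c π μ ν := by
  obtain ⟨K, hK, hKμ⟩ := hμcompact
  obtain ⟨L, hL, hLν⟩ := hνcompact
  obtain ⟨H, hH⟩ := hslim.bddAbove_range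
  set Q := cthickening H K ×ˢ cthickening H L
  have hQ : IsCompact Q := hK.cthickening.prod hL.cthickening
  have hQdisc k ρ (hρ : IsCoupling ρ (discretize (hs k) μ) (discretize (hs k) ν)) : ρ Qᶜ = 0 :=
    hρ.measure_compl_cthickening_prod_eq_zero_of_discretize (hspos k)
      (by linarith [hspos k, hH (mem_range_self k)]) hKμ hLν
  have hπs' k : IsCoupling (πs k) (μ.map (gridRound (hs k))) (ν.map (gridRound (hs k))) := by
    simpa only [discretize_eq_map (hspos k)] using (hπs k).1
  have := fun k => μ.isProbabilityMeasure_map (measurable_gridRound (hs k)).aemeasurable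
  obtain ⟨π, hπQ, φ, hφ, hlim⟩ := ProbabilityMeasure.exists_subseq_tendsto_of_measure_compl_eq_zero
    hQ (fun k => ⟨πs k, (hπs' k).isProbabilityMeasure⟩) fun k => hQdisc k _ (hπs k).1
  have hsφpos k : 0 < hs (φ k) := hspos (φ k)
  have hsφlim := hslim.comp hφ.tendsto_atTop
  refine ⟨φ, π, hφ, inferInstance, ProbabilityMeasure.tendsto_iff_forall_integral_tendsto.1 hlim,
    IsCoupling.of_tendsto hlim (ProbabilityMeasure.tendsto_map_gridRound hsφpos hsφlim ⟨μ, hμ⟩)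
      (ProbabilityMeasure.tendsto_map_gridRound hsφpos hsφlim ⟨ν, hν⟩) fun k => hπs' (φ k),
    fun π' hπ' => ?_⟩
  have := hπ'.isProbabilityMeasure
  have hπ'Q : π' Qᶜ = 0 := hπ'.measure_compl_prod_eq_zero isClosed_cthickening.measurableSet
    isClosed_cthickening.measurableSet
    (measure_mono_null (compl_subset_compl.2 (self_subset_cthickening K)) hKμ)
    (measure_mono_null (compl_subset_compl.2 (self_subset_cthickening L)) hLν)
  have hdisc k := hπ'.discretize (hsφpos k)
  exact le_of_tendsto_of_tendsto'
    (ProbabilityMeasure.tendsto_integral_of_measure_compl_eq_zero hlim hQ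
      (fun k => hQdisc _ _ (hπs (φ k)).1) hπQ hc)
    (ProbabilityMeasure.tendsto_integral_of_measure_compl_eq_zero
      (ProbabilityMeasure.tendsto_map_prodMap_gridRound hsφpos hsφlim ⟨π', this⟩) hQ
      (fun k => hQdisc _ _ (hdisc k)) hπ'Q hc)
    fun k => (hπs (φ k)).2 _ (hdisc k)
end
end

section
/- Let A be a real m × n matrix, b ∈ ℝ^m and c ∈ ℝ^n, and suppose the linear program LP(A,b,c): minimize cᵀx subject to Ax = b, x ≥ 0, has a unique optimal solution x*. Then there exists ε > 0 such that for every c' ∈ ℝ^n with ‖c' − c‖ < ε, x* is also an optimal solution of LP(A,b,c'); in particular, for every c' with ‖c' − c‖ < ε the perturbed linear program has an optimal solution whose support equals the support of x*. -/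
/-!
Let `K` be the cone of feasible directions at `x*`. Uniqueness of the optimum forces
`c ⬝ᵥ d > 0` for every nonzero `d ∈ K`: otherwise `x* + t • d` would be a second optimum
for small `t > 0`. On the compact slice `K ∩ sphere 0 1` strict positivity persists for all
`c'` near `c`, and nonnegativity of `c' ⬝ᵥ ·` on `K` is exactly the optimality of `x*` for `c'`.
-/

open Matrix

noncomputable section

/-- A feasible point of the standard form linear program `LP(A, b, c)`:
`A x = b` and `x ≥ 0` componentwise. -/
def IsFeasible {m n : ℕ} (A : Matrix (Fin m) (Fin n) ℝ) (b : Fin m → ℝ)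
    (x : Fin n → ℝ) : Prop :=
  A.mulVec x = b ∧ ∀ i, 0 ≤ x i

/-- An optimal solution of the standard form linear program `LP(A, b, c)`:
a feasible point minimizing `cᵀ x` over all feasible points. -/
def IsOptimalSolution {m n : ℕ} (A : Matrix (Fin m) (Fin n) ℝ) (b : Fin m → ℝ)
    (c : Fin n → ℝ) (x : Fin n → ℝ) : Prop :=
  IsFeasible A b x ∧ ∀ y : Fin n → ℝ, IsFeasible A b y → c ⬝ᵥ x ≤ c ⬝ᵥ y

open Filter Topology

theorem IsCompact.eventually_forall_dotProduct_pos {ι : Type*} [Fintype ι] {S : Set (ι → ℝ)}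
    (hS : IsCompact S) {c : ι → ℝ} (hc : ∀ d ∈ S, 0 < c ⬝ᵥ d) :
    ∀ᶠ c' in 𝓝 c, ∀ d ∈ S, 0 < c' ⬝ᵥ d :=
  hS.eventually_forall_of_forall_eventually fun d hd =>
    ((continuous_fst.dotProduct continuous_snd).tendsto (c, d)).eventually
      (lt_mem_nhds (hc d hd))

def feasibleCone {m n : ℕ} (A : Matrix (Fin m) (Fin n) ℝ) (x : Fin n → ℝ) :
    Set (Fin n → ℝ) :=
  {d | A *ᵥ d = 0 ∧ ∀ i, x i = 0 → 0 ≤ d i}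

section FeasibleCone

variable {m n : ℕ} {A : Matrix (Fin m) (Fin n) ℝ} {b : Fin m → ℝ} {x : Fin n → ℝ}

theorem sub_mem_feasibleCone {y : Fin n → ℝ} (hx : IsFeasible A b x)
    (hy : IsFeasible A b y) : y - x ∈ feasibleCone A x :=
  ⟨by rw [mulVec_sub, hy.1, hx.1, sub_self], fun i hi => by simpa [hi] using hy.2 i⟩

theorem smul_mem_feasibleCone {d : Fin n → ℝ} (hd : d ∈ feasibleCone A x) {t : ℝ} (ht : 0 ≤ t) :
    t • d ∈ feasibleCone A x :=
  ⟨by rw [mulVec_smul, hd.1, smul_zero], fun i hi => mul_nonneg ht (hd.2 i hi)⟩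

theorem isClosed_feasibleCone : IsClosed (feasibleCone A x) := by
  simp only [feasibleCone, Set.ofPred_and, Set.ofPred_forall]
  exact (isClosed_eq ((continuous_const (y := A)).matrix_mulVec continuous_id)
    continuous_const).inter
    (isClosed_iInter fun i => isClosed_iInter fun _ => isClosed_le continuous_const
      (continuous_apply i))

theorem isCompact_feasibleCone_inter_sphere :
    IsCompact (feasibleCone A x ∩ Metric.sphere 0 1) :=
  (isCompact_sphere 0 1).inter_left isClosed_feasibleCone

theorem dotProduct_nonneg_of_forall_mem_feasibleCone_inter_sphere {c : Fin n → ℝ}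
    (hc : ∀ d ∈ feasibleCone A x ∩ Metric.sphere 0 1, 0 < c ⬝ᵥ d) {d : Fin n → ℝ}
    (hd : d ∈ feasibleCone A x) : 0 ≤ c ⬝ᵥ d := by
  rcases eq_or_ne d 0 with rfl | hd0
  · simp
  have hunit : ‖d‖⁻¹ • d ∈ feasibleCone A x ∩ Metric.sphere 0 1 :=
    ⟨smul_mem_feasibleCone hd (by positivity), by simp [norm_smul, hd0]⟩
  have := hc _ hunit
  rw [dotProduct_smul, smul_eq_mul] at this
  exact (pos_of_mul_pos_right this (by positivity)).le

theorem isOptimalSolution_of_forall_mem_feasibleCone {c : Fin n → ℝ} (hx : IsFeasible A b x)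
    (hc : ∀ d ∈ feasibleCone A x, 0 ≤ c ⬝ᵥ d) : IsOptimalSolution A b c x :=
  ⟨hx, fun y hy => by simpa [dotProduct_sub] using hc _ (sub_mem_feasibleCone hx hy)⟩

theorem exists_pos_isFeasible_add_smul (hx : IsFeasible A b x) {d : Fin n → ℝ}
    (hd : d ∈ feasibleCone A x) : ∃ t > (0 : ℝ), IsFeasible A b (x + t • d) := by
  have hcoord : ∀ i, ∀ᶠ t in 𝓝[>] (0 : ℝ), 0 ≤ x i + t * d i := by
    intro i
    rcases (hx.2 i).eq_or_lt with hxi | hxi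
    · filter_upwards [self_mem_nhdsWithin] with t ht
      rw [← hxi, zero_add]
      exact mul_nonneg (le_of_lt ht) (hd.2 i hxi.symm)
    · have hcont : Continuous fun t : ℝ => x i + t * d i := by fun_prop
      have := hcont.tendsto 0
      simp only [zero_mul, add_zero] at this
      exact nhdsWithin_le_nhds ((this.eventually (lt_mem_nhds hxi)).mono fun t ht => ht.le)
  obtain ⟨t, ht, hpos⟩ := ((Filter.eventually_all.2 hcoord).and self_mem_nhdsWithin).exists
  exact ⟨t, hpos, by rw [mulVec_add, mulVec_smul, hd.1, smul_zero, add_zero, hx.1], ht⟩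

theorem dotProduct_pos_of_mem_feasibleCone {c : Fin n → ℝ} (hopt : IsOptimalSolution A b c x)
    (huniq : ∀ y, IsOptimalSolution A b c y → y = x) {d : Fin n → ℝ}
    (hd : d ∈ feasibleCone A x) (hd0 : d ≠ 0) : 0 < c ⬝ᵥ d := by
  obtain ⟨t, ht, hfeas⟩ := exists_pos_isFeasible_add_smul hopt.1 hd
  have hcost : c ⬝ᵥ (x + t • d) = c ⬝ᵥ x + t * c ⬝ᵥ d := by
    rw [dotProduct_add, dotProduct_smul, smul_eq_mul]
  have hnonneg : 0 ≤ c ⬝ᵥ d := by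
    have := hopt.2 _ hfeas
    rw [hcost] at this
    exact nonneg_of_mul_nonneg_right (by linarith) ht
  refine hnonneg.lt_of_ne fun hzero => hd0 ?_
  have hopt' : IsOptimalSolution A b c (x + t • d) :=
    ⟨hfeas, fun y hy => by rw [hcost, ← hzero, mul_zero, add_zero]; exact hopt.2 y hy⟩
  exact (smul_eq_zero.1 (add_eq_left.1 (huniq _ hopt'))).resolve_left ht.ne'

end FeasibleCone

/-- Stability of a linear program with respect to the cost vector: if
`LP(A, b, c)` has a unique optimal solution `x*`, then for all `c'` close
enough to `c`, `x*` is still optimal for `LP(A, b, c')`; in particular the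
perturbed program has an optimal solution whose support equals that of `x*`. -/
theorem lp_stability_cost
    {m n : ℕ} (A : Matrix (Fin m) (Fin n) ℝ) (b : Fin m → ℝ) (c : Fin n → ℝ)
    (xstar : Fin n → ℝ) (hopt : IsOptimalSolution A b c xstar)
    (huniq : ∀ y : Fin n → ℝ, IsOptimalSolution A b c y → y = xstar) :
    ∃ ε > (0 : ℝ), ∀ c' : Fin n → ℝ, ‖c' - c‖ < ε →
      IsOptimalSolution A b c' xstar ∧
      ∃ x' : Fin n → ℝ, IsOptimalSolution A b c' x' ∧
        {i | x' i ≠ 0} = {i | xstar i ≠ 0} := by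
  have hpos : ∀ d ∈ feasibleCone A xstar ∩ Metric.sphere 0 1, 0 < c ⬝ᵥ d := fun d hd =>
    dotProduct_pos_of_mem_feasibleCone hopt huniq hd.1 (Metric.ne_of_mem_sphere hd.2 one_ne_zero)
  obtain ⟨ε, hε, hball⟩ := Metric.eventually_nhds_iff.1
    (isCompact_feasibleCone_inter_sphere.eventually_forall_dotProduct_pos hpos)
  refine ⟨ε, hε, fun c' hc' => ?_⟩
  have hopt' : IsOptimalSolution A b c' xstar :=
    isOptimalSolution_of_forall_mem_feasibleCone hopt.1 fun d hd =>
      dotProduct_nonneg_of_forall_mem_feasibleCone_inter_sphere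
        (hball (by rwa [dist_eq_norm])) hd
  exact ⟨hopt', xstar, hopt', rfl⟩
end
end

section
/- Let I, J, I', J' be finite sets with surjections p : I' → I and q : J' → J. Let μ' : I' → ℝ≥0 and ν' : J' → ℝ≥0 satisfy Σ_{i'} μ'_{i'} = Σ_{j'} ν'_{j'} = 1, and define coarse weights μ_i = Σ_{i' : p(i') = i} μ'_{i'} and ν_j = Σ_{j' : q(j') = j} ν'_{j'}. Given a cost c : I × J → ℝ, define the refined cost ĉ(i', j') = c(p(i'), q(j')). Then the optimal value of the discrete transportation linear program with marginals μ', ν' and cost ĉ equals the optimal value of the discrete transportation linear program with marginals μ, ν and cost c. -/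
open Finset

noncomputable section

/-- A (discrete) transference plan between the weights `μ` and `ν`:
a nonnegative matrix whose row sums are `μ` and column sums are `ν`. -/
def IsPlan {I J : Type*} [Fintype I] [Fintype J]
    (μ : I → ℝ) (ν : J → ℝ) (π : I → J → ℝ) : Prop :=
  (∀ i j, 0 ≤ π i j) ∧ (∀ i, ∑ j, π i j = μ i) ∧ (∀ j, ∑ i, π i j = ν j)

/-- The cost `Σ_{i,j} c_{ij} π_{ij}` of a plan `π` for the cost matrix `c`. -/
def planCost {I J : Type*} [Fintype I] [Fintype J]
    (c : I × J → ℝ) (π : I → J → ℝ) : ℝ :=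
  ∑ i, ∑ j, c (i, j) * π i j

private lemma collapse_fib {K K' : Type*} [Fintype K] [Fintype K'] [DecidableEq K]
    (p : K' → K) (f : K' → ℝ) :
    ∑ k, ∑ k' ∈ univ.filter (fun k' => p k' = k), f k' = ∑ k', f k' :=
  Finset.sum_fiberwise _ _ _

/-- Refinement invariance of the optimal value: given surjections `p : I' → I`,
`q : J' → J`, fine marginals `μ', ν'` summing to one, coarse marginals obtained
by aggregating along `p` and `q`, and the refined cost `ĉ(i',j') = c(p i', q j')`,
the optimal value of the refined transportation LP equals that of the coarse one. -/
theorem refined_LP_value_eq_coarse_LP_value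
    {I J I' J' : Type*} [Fintype I] [Fintype J] [Fintype I'] [Fintype J']
    [DecidableEq I] [DecidableEq J]
    (p : I' → I) (q : J' → J)
    (hp : Function.Surjective p) (hq : Function.Surjective q)
    (μ' : I' → ℝ) (ν' : J' → ℝ)
    (hμ'0 : ∀ i', 0 ≤ μ' i') (hν'0 : ∀ j', 0 ≤ ν' j')
    (hμ'1 : ∑ i', μ' i' = 1) (hν'1 : ∑ j', ν' j' = 1)
    (c : I × J → ℝ) :
    sInf {r : ℝ | ∃ π' : I' → J' → ℝ,
        IsPlan μ' ν' π' ∧ r = planCost (fun ij : I' × J' => c (p ij.1, q ij.2)) π'} =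
    sInf {r : ℝ | ∃ π : I → J → ℝ,
        IsPlan (fun i => ∑ i' ∈ univ.filter (fun i' => p i' = i), μ' i')
               (fun j => ∑ j' ∈ univ.filter (fun j' => q j' = j), ν' j') π ∧
        r = planCost c π} := by
  set μc : I → ℝ := fun i => ∑ i' ∈ univ.filter (fun i' => p i' = i), μ' i' with hμc
  set νc : J → ℝ := fun j => ∑ j' ∈ univ.filter (fun j' => q j' = j), ν' j' with hνc
  congr 1
  ext r
  simp only [Set.mem_setOf_eq]
  constructor
  · rintro ⟨π', ⟨hpos, hrow, hcol⟩, rfl⟩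
    refine ⟨fun i j => ∑ i' ∈ univ.filter (fun i' => p i' = i),
        ∑ j' ∈ univ.filter (fun j' => q j' = j), π' i' j', ⟨?_, ?_, ?_⟩, ?_⟩
    · intro i j
      exact Finset.sum_nonneg fun i' _ => Finset.sum_nonneg fun j' _ => hpos i' j'
    · intro i
      rw [Finset.sum_comm]
      refine Finset.sum_congr rfl fun i' _ => ?_
      rw [collapse_fib q]
      exact hrow i'
    · intro j
      rw [collapse_fib p (fun i' => ∑ j' ∈ univ.filter (fun j' => q j' = j), π' i' j'),
        Finset.sum_comm]
      exact Finset.sum_congr rfl fun j' _ => hcol j'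
    · unfold planCost
      rw [← collapse_fib p (fun i' => ∑ j', c (p i', q j') * π' i' j')]
      refine Finset.sum_congr rfl fun i hi => ?_
      rw [Finset.sum_congr rfl fun i' (_ : i' ∈ univ.filter fun k' => p k' = i) =>
        (collapse_fib q (fun j' => c (p i', q j') * π' i' j')).symm]
      conv_lhs => rw [Finset.sum_comm]
      refine Finset.sum_congr rfl fun j hj => ?_
      rw [Finset.mul_sum]
      refine Finset.sum_congr rfl fun i' hi' => ?_
      rw [Finset.mul_sum]
      refine Finset.sum_congr rfl fun j' hj' => ?_
      simp only [mem_filter] at hi' hj'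
      rw [hi'.2, hj'.2]
  · rintro ⟨π, ⟨hpos, hrow, hcol⟩, rfl⟩
    -- zero lemmas
    have hπ0r : ∀ i j, μc i = 0 → π i j = 0 := by
      intro i j h
      have := (Finset.sum_eq_zero_iff_of_nonneg (fun j _ => hpos i j)).mp
        ((hrow i).trans h)
      exact this j (mem_univ j)
    have hπ0c : ∀ i j, νc j = 0 → π i j = 0 := by
      intro i j h
      have := (Finset.sum_eq_zero_iff_of_nonneg (fun i _ => hpos i j)).mp
        ((hcol j).trans h)
      exact this i (mem_univ i)
    have hμ0 : ∀ i', μc (p i') = 0 → μ' i' = 0 := by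
      intro i' h
      have := (Finset.sum_eq_zero_iff_of_nonneg
        (fun k _ => hμ'0 k)).mp h
      exact this i' (by simp)
    have hν0 : ∀ j', νc (q j') = 0 → ν' j' = 0 := by
      intro j' h
      have := (Finset.sum_eq_zero_iff_of_nonneg
        (fun k _ => hν'0 k)).mp h
      exact this j' (by simp)
    have hμcnn : ∀ i, 0 ≤ μc i := fun i => Finset.sum_nonneg fun k _ => hμ'0 k
    have hνcnn : ∀ j, 0 ≤ νc j := fun j => Finset.sum_nonneg fun k _ => hν'0 k
    set π' : I' → J' → ℝ :=
      fun i' j' => (μ' i' / μc (p i')) * ((ν' j' / νc (q j')) * π (p i') (q j'))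
      with hπ'
    -- fiber sums
    have hfibJ : ∀ (a : I) (j : J),
        ∑ j' ∈ univ.filter (fun j' => q j' = j), (ν' j' / νc (q j')) * π a (q j')
          = π a j := by
      intro a j
      have : ∀ j' ∈ univ.filter (fun j' => q j' = j),
          (ν' j' / νc (q j')) * π a (q j') = ν' j' * (π a j / νc j) := by
        intro j' hj'
        simp only [mem_filter] at hj'
        rw [hj'.2]; ring
      rw [Finset.sum_congr rfl this, ← Finset.sum_mul]
      by_cases h : νc j = 0
      · simp [hπ0c a j h]
      · rw [show ∑ j' ∈ univ.filter (fun j' => q j' = j), ν' j' = νc j from rfl]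
        field_simp
    have hfibI : ∀ (b : J) (i : I),
        ∑ i' ∈ univ.filter (fun i' => p i' = i), (μ' i' / μc (p i')) * π (p i') b
          = π i b := by
      intro b i
      have : ∀ i' ∈ univ.filter (fun i' => p i' = i),
          (μ' i' / μc (p i')) * π (p i') b = μ' i' * (π i b / μc i) := by
        intro i' hi'
        simp only [mem_filter] at hi'
        rw [hi'.2]; ring
      rw [Finset.sum_congr rfl this, ← Finset.sum_mul]
      by_cases h : μc i = 0
      · simp [hπ0r i b h]
      · rw [show ∑ i' ∈ univ.filter (fun i' => p i' = i), μ' i' = μc i from rfl]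
        field_simp
    refine ⟨π', ⟨?_, ?_, ?_⟩, ?_⟩
    · intro i' j'
      exact mul_nonneg (div_nonneg (hμ'0 i') (hμcnn _))
        (mul_nonneg (div_nonneg (hν'0 j') (hνcnn _)) (hpos _ _))
    · intro i'
      rw [hπ']
      simp only
      rw [← Finset.mul_sum, ← collapse_fib q (fun j' => (ν' j' / νc (q j')) * π (p i') (q j'))]
      rw [Finset.sum_congr rfl fun j _ => hfibJ (p i') j, hrow (p i')]
      by_cases h : μc (p i') = 0
      · simp [h, hμ0 i' h]
      · field_simp
    · intro j'
      rw [hπ']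
      simp only
      have : ∀ i', (μ' i' / μc (p i')) * ((ν' j' / νc (q j')) * π (p i') (q j'))
          = (ν' j' / νc (q j')) * ((μ' i' / μc (p i')) * π (p i') (q j')) := by
        intro i'; ring
      rw [Finset.sum_congr rfl fun i' _ => this i', ← Finset.mul_sum,
        ← collapse_fib p (fun i' => (μ' i' / μc (p i')) * π (p i') (q j'))]
      rw [Finset.sum_congr rfl fun i => fun _ => hfibI (q j') i, hcol (q j')]
      by_cases h : νc (q j') = 0
      · simp [h, hν0 j' h]
      · field_simp
    · unfold planCost
      rw [← collapse_fib p (fun i' => ∑ j', c (p i', q j') * π' i' j')]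
      refine Finset.sum_congr rfl fun i _ => ?_
      rw [Finset.sum_congr rfl fun i' (_ : i' ∈ univ.filter fun k' => p k' = i) =>
        (collapse_fib q (fun j' => c (p i', q j') * π' i' j')).symm]
      conv_rhs => rw [Finset.sum_comm]
      refine Finset.sum_congr rfl fun j _ => ?_
      have key : ∀ i' ∈ univ.filter (fun i' => p i' = i),
          ∑ j' ∈ univ.filter (fun j' => q j' = j), c (p i', q j') * π' i' j'
            = μ' i' * (c (i, j) * π i j * (νc j / νc j) / μc i) := by
        intro i' hi'
        simp only [mem_filter] at hi'
        have : ∀ j' ∈ univ.filter (fun j' => q j' = j),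
            c (p i', q j') * π' i' j'
              = ν' j' * (μ' i' * (c (i, j) * π i j / (μc i * νc j))) := by
          intro j' hj'
          simp only [mem_filter] at hj'
          rw [hπ']
          simp only [hi'.2, hj'.2]
          ring
        rw [Finset.sum_congr rfl this, ← Finset.sum_mul,
          show ∑ j' ∈ univ.filter (fun j' => q j' = j), ν' j' = νc j from rfl]
        ring
      rw [Finset.sum_congr rfl key, ← Finset.sum_mul,
        show ∑ i' ∈ univ.filter (fun i' => p i' = i), μ' i' = μc i from rfl]
      by_cases hμ : μc i = 0
      · simp [hμ, hπ0r i j hμ]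
      by_cases hν : νc j = 0
      · simp [hν, hπ0c i j hν]
      field_simp
end
end

section
/- Let I, J, I', J' be finite sets with surjections p : I' → I and q : J' → J. Let μ' : I' → ℝ≥0 and ν' : J' → ℝ≥0 satisfy Σ_{i'} μ'_{i'} = Σ_{j'} ν'_{j'} = 1, and define coarse weights μ_i = Σ_{i' : p(i') = i} μ'_{i'} and ν_j = Σ_{j' : q(j') = j} ν'_{j'}. Given a cost c : I × J → ℝ, define the refined cost ĉ(i', j') = c(p(i'), q(j')). Let π be an optimal transference plan for the coarse transportation linear program with marginals μ, ν and cost c. Then there exists an optimal transference plan π' for the refined transportation linear program with marginals μ', ν' and cost ĉ such that π is the pushforward of π', i.e. π_{ij} = Σ_{i' : p(i') = i} Σ_{j' : q(j') = j} π'_{i'j'} for all (i,j), and such that π'_{i'j'} > 0 implies π_{p(i'), q(j')} > 0; in particular the support of π' is contained in the preimage under (p, q) of the support of π. -/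
open Finset

noncomputable section

/-- An optimal (discrete) transference plan: a plan minimizing the cost over
all plans. -/
def IsOptimalPlan {I J : Type*} [Fintype I] [Fintype J]
    (μ : I → ℝ) (ν : J → ℝ) (c : I × J → ℝ) (π : I → J → ℝ) : Prop :=
  IsPlan μ ν π ∧ ∀ π' : I → J → ℝ, IsPlan μ ν π' → planCost c π ≤ planCost c π'

/-- Lifting of an optimal coarse plan: every optimal plan `π` of the coarse
transportation LP is the pushforward under `(p, q)` of some optimal plan `π'`
of the refined LP with cost `ĉ(i',j') = c(p i', q j')`, and the support of `π'`
is contained in the preimage of the support of `π`. -/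
theorem optimal_coarse_plan_lifts_to_refined
    {I J I' J' : Type*} [Fintype I] [Fintype J] [Fintype I'] [Fintype J']
    [DecidableEq I] [DecidableEq J]
    (p : I' → I) (q : J' → J)
    (hp : Function.Surjective p) (hq : Function.Surjective q)
    (μ' : I' → ℝ) (ν' : J' → ℝ)
    (hμ'0 : ∀ i', 0 ≤ μ' i') (hν'0 : ∀ j', 0 ≤ ν' j')
    (hμ'1 : ∑ i', μ' i' = 1) (hν'1 : ∑ j', ν' j' = 1)
    (c : I × J → ℝ)
    (π : I → J → ℝ)
    (hπ : IsOptimalPlan (fun i => ∑ i' ∈ univ.filter (fun i' => p i' = i), μ' i')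
            (fun j => ∑ j' ∈ univ.filter (fun j' => q j' = j), ν' j') c π) :
    ∃ π' : I' → J' → ℝ,
      IsOptimalPlan μ' ν' (fun ij : I' × J' => c (p ij.1, q ij.2)) π' ∧
      (∀ i j, π i j =
        ∑ i' ∈ univ.filter (fun i' => p i' = i),
          ∑ j' ∈ univ.filter (fun j' => q j' = j), π' i' j') ∧
      (∀ i' j', 0 < π' i' j' → 0 < π (p i') (q j')) := by
  classical
  obtain ⟨⟨hπ0, hπrow, hπcol⟩, hπopt⟩ := hπ
  set μ : I → ℝ := fun i => ∑ i' ∈ univ.filter (fun i' => p i' = i), μ' i' with hμdef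
  set ν : J → ℝ := fun j => ∑ j' ∈ univ.filter (fun j' => q j' = j), ν' j' with hνdef
  have hμ0 : ∀ i, 0 ≤ μ i := fun i => Finset.sum_nonneg fun x _ => hμ'0 x
  have hν0 : ∀ j, 0 ≤ ν j := fun j => Finset.sum_nonneg fun x _ => hν'0 x
  have hμ'le : ∀ i', μ' i' ≤ μ (p i') := fun i' =>
    Finset.single_le_sum (fun x _ => hμ'0 x) (by simp)
  have hν'le : ∀ j', ν' j' ≤ ν (q j') := fun j' =>
    Finset.single_le_sum (fun x _ => hν'0 x) (by simp)
  have hπμzero : ∀ i j, μ i = 0 → π i j = 0 := by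
    intro i j h
    have h' : ∑ j, π i j = 0 := by rw [hπrow i]; exact h
    exact (Finset.sum_eq_zero_iff_of_nonneg (fun x _ => hπ0 i x)).mp h' j (mem_univ j)
  have hπνzero : ∀ i j, ν j = 0 → π i j = 0 := by
    intro i j h
    have h' : ∑ i, π i j = 0 := by rw [hπcol j]; exact h
    exact (Finset.sum_eq_zero_iff_of_nonneg (fun x _ => hπ0 x j)).mp h' i (mem_univ i)
  set π' : I' → J' → ℝ :=
    fun i' j' => π (p i') (q j') * (μ' i' / μ (p i')) * (ν' j' / ν (q j')) with hπ'def
  have hπ'0 : ∀ i' j', 0 ≤ π' i' j' := fun i' j' =>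
    mul_nonneg (mul_nonneg (hπ0 _ _) (div_nonneg (hμ'0 _) (hμ0 _)))
      (div_nonneg (hν'0 _) (hν0 _))
  -- the pushforward property
  have hpush : ∀ i j, π i j =
      ∑ i' ∈ univ.filter (fun i' => p i' = i),
        ∑ j' ∈ univ.filter (fun j' => q j' = j), π' i' j' := by
    intro i j
    by_cases hμi : μ i = 0
    · rw [hπμzero i j hμi]
      symm
      apply Finset.sum_eq_zero
      intro i' hi'
      apply Finset.sum_eq_zero
      intro j' hj'
      have hpi : p i' = i := (mem_filter.mp hi').2
      have hμ'z : μ' i' = 0 :=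
        le_antisymm (by rw [← hμi, ← hpi]; exact hμ'le i') (hμ'0 i')
      simp [hπ'def, hμ'z]
    · by_cases hνj : ν j = 0
      · rw [hπνzero i j hνj]
        symm
        apply Finset.sum_eq_zero
        intro i' hi'
        apply Finset.sum_eq_zero
        intro j' hj'
        have hqj : q j' = j := (mem_filter.mp hj').2
        have hν'z : ν' j' = 0 :=
          le_antisymm (by rw [← hνj, ← hqj]; exact hν'le j') (hν'0 j')
        simp [hπ'def, hν'z]
      · have step : ∀ i' ∈ univ.filter (fun i' => p i' = i),
            ∑ j' ∈ univ.filter (fun j' => q j' = j), π' i' j'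
              = π i j * (μ' i' / μ i) := by
          intro i' hi'
          have hpi : p i' = i := (mem_filter.mp hi').2
          have : ∑ j' ∈ univ.filter (fun j' => q j' = j), π' i' j'
              = ∑ j' ∈ univ.filter (fun j' => q j' = j),
                  π i j * (μ' i' / μ i) * (ν' j' / ν j) := by
            apply Finset.sum_congr rfl
            intro j' hj'
            have hqj : q j' = j := (mem_filter.mp hj').2
            simp [hπ'def, hpi, hqj]
          rw [this, ← Finset.mul_sum, ← Finset.sum_div]
          rw [show (∑ j' ∈ univ.filter (fun j' => q j' = j), ν' j') = ν j from rfl]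
          rw [div_self hνj, mul_one]
        rw [Finset.sum_congr rfl step, ← Finset.mul_sum, ← Finset.sum_div]
        rw [show (∑ i' ∈ univ.filter (fun i' => p i' = i), μ' i') = μ i from rfl]
        rw [div_self hμi, mul_one]
  -- π' is a plan with marginals μ', ν'
  have hπ'row : ∀ i', ∑ j', π' i' j' = μ' i' := by
    intro i'
    by_cases hμi : μ (p i') = 0
    · have hμ'z : μ' i' = 0 := le_antisymm (hμi ▸ hμ'le i') (hμ'0 i')
      rw [hμ'z]
      apply Finset.sum_eq_zero
      intro j' _
      simp [hπ'def, hμ'z]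
    · rw [← Finset.sum_fiberwise univ q (fun j' => π' i' j')]
      have step : ∀ j ∈ (univ : Finset J),
          ∑ j' ∈ univ.filter (fun j' => q j' = j), π' i' j'
            = π (p i') j * (μ' i' / μ (p i')) := by
        intro j _
        by_cases hνj : ν j = 0
        · rw [hπνzero _ j hνj, zero_mul]
          apply Finset.sum_eq_zero
          intro j' hj'
          have hqj : q j' = j := (mem_filter.mp hj').2
          have hν'z : ν' j' = 0 :=
            le_antisymm (by rw [← hνj, ← hqj]; exact hν'le j') (hν'0 j')
          simp [hπ'def, hν'z]
        · have : ∑ j' ∈ univ.filter (fun j' => q j' = j), π' i' j'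
              = ∑ j' ∈ univ.filter (fun j' => q j' = j),
                  π (p i') j * (μ' i' / μ (p i')) * (ν' j' / ν j) := by
            apply Finset.sum_congr rfl
            intro j' hj'
            have hqj : q j' = j := (mem_filter.mp hj').2
            simp [hπ'def, hqj]
          rw [this, ← Finset.mul_sum, ← Finset.sum_div]
          rw [show (∑ j' ∈ univ.filter (fun j' => q j' = j), ν' j') = ν j from rfl]
          rw [div_self hνj, mul_one]
      rw [Finset.sum_congr rfl step, ← Finset.sum_mul, hπrow (p i')]
      field_simp
  have hπ'col : ∀ j', ∑ i', π' i' j' = ν' j' := by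
    intro j'
    by_cases hνj : ν (q j') = 0
    · have hν'z : ν' j' = 0 := le_antisymm (hνj ▸ hν'le j') (hν'0 j')
      rw [hν'z]
      apply Finset.sum_eq_zero
      intro i' _
      simp [hπ'def, hν'z]
    · rw [← Finset.sum_fiberwise univ p (fun i' => π' i' j')]
      have step : ∀ i ∈ (univ : Finset I),
          ∑ i' ∈ univ.filter (fun i' => p i' = i), π' i' j'
            = π i (q j') * (ν' j' / ν (q j')) := by
        intro i _
        by_cases hμi : μ i = 0
        · rw [hπμzero i _ hμi, zero_mul]
          apply Finset.sum_eq_zero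
          intro i' hi'
          have hpi : p i' = i := (mem_filter.mp hi').2
          have hμ'z : μ' i' = 0 :=
            le_antisymm (by rw [← hμi, ← hpi]; exact hμ'le i') (hμ'0 i')
          simp [hπ'def, hμ'z]
        · have : ∑ i' ∈ univ.filter (fun i' => p i' = i), π' i' j'
              = ∑ i' ∈ univ.filter (fun i' => p i' = i),
                  π i (q j') * (ν' j' / ν (q j')) * (μ' i' / μ i) := by
            apply Finset.sum_congr rfl
            intro i' hi'
            have hpi : p i' = i := (mem_filter.mp hi').2
            simp [hπ'def, hpi]; ring
          rw [this, ← Finset.mul_sum, ← Finset.sum_div]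
          rw [show (∑ i' ∈ univ.filter (fun i' => p i' = i), μ' i') = μ i from rfl]
          rw [div_self hμi, mul_one]
      rw [Finset.sum_congr rfl step, ← Finset.sum_mul, hπcol (q j')]
      field_simp
  have hπ'plan : IsPlan μ' ν' π' := ⟨hπ'0, hπ'row, hπ'col⟩
  -- pushforward of any refined plan has equal cost
  have hcostpush : ∀ ρ : I' → J' → ℝ,
      planCost (fun ij : I' × J' => c (p ij.1, q ij.2)) ρ =
      planCost c (fun i j => ∑ i' ∈ univ.filter (fun i' => p i' = i),
        ∑ j' ∈ univ.filter (fun j' => q j' = j), ρ i' j') := by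
    intro ρ
    unfold planCost
    rw [← Finset.sum_fiberwise univ p
      (fun i' => ∑ j', c (p i', q j') * ρ i' j')]
    apply Finset.sum_congr rfl
    intro i _
    calc ∑ i' ∈ univ.filter (fun i' => p i' = i), ∑ j', c (p i', q j') * ρ i' j'
        = ∑ i' ∈ univ.filter (fun i' => p i' = i), ∑ j,
            ∑ j' ∈ univ.filter (fun j' => q j' = j), c (i, j) * ρ i' j' := by
          apply Finset.sum_congr rfl
          intro i' hi'
          have hpi : p i' = i := (mem_filter.mp hi').2
          rw [← Finset.sum_fiberwise univ q (fun j' => c (p i', q j') * ρ i' j')]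
          apply Finset.sum_congr rfl
          intro j _
          apply Finset.sum_congr rfl
          intro j' hj'
          have hqj : q j' = j := (mem_filter.mp hj').2
          rw [hpi, hqj]
      _ = ∑ j, ∑ i' ∈ univ.filter (fun i' => p i' = i),
            ∑ j' ∈ univ.filter (fun j' => q j' = j), c (i, j) * ρ i' j' :=
          Finset.sum_comm
      _ = ∑ j, c (i, j) * ∑ i' ∈ univ.filter (fun i' => p i' = i),
            ∑ j' ∈ univ.filter (fun j' => q j' = j), ρ i' j' := by
          apply Finset.sum_congr rfl
          intro j _
          rw [Finset.mul_sum]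
          apply Finset.sum_congr rfl
          intro i' _
          rw [Finset.mul_sum]
  -- pushforward of a refined plan is a coarse plan
  have hplanpush : ∀ ρ : I' → J' → ℝ, IsPlan μ' ν' ρ →
      IsPlan μ ν (fun i j => ∑ i' ∈ univ.filter (fun i' => p i' = i),
        ∑ j' ∈ univ.filter (fun j' => q j' = j), ρ i' j') := by
    rintro ρ ⟨hρ0, hρrow, hρcol⟩
    refine ⟨fun i j => Finset.sum_nonneg fun _ _ => Finset.sum_nonneg fun _ _ => hρ0 _ _,
      ?_, ?_⟩
    · intro i
      rw [Finset.sum_comm]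
      calc ∑ i' ∈ univ.filter (fun i' => p i' = i), ∑ j,
            ∑ j' ∈ univ.filter (fun j' => q j' = j), ρ i' j'
          = ∑ i' ∈ univ.filter (fun i' => p i' = i), μ' i' := by
            apply Finset.sum_congr rfl
            intro i' _
            rw [Finset.sum_fiberwise univ q (fun j' => ρ i' j'), hρrow]
        _ = μ i := rfl
    · intro j
      calc ∑ i, ∑ i' ∈ univ.filter (fun i' => p i' = i),
            ∑ j' ∈ univ.filter (fun j' => q j' = j), ρ i' j'
          = ∑ i, ∑ i' ∈ univ.filter (fun i' => p i' = i),
              ∑ j' ∈ univ.filter (fun j' => q j' = j), ρ i' j' := rfl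
        _ = ∑ i', ∑ j' ∈ univ.filter (fun j' => q j' = j), ρ i' j' :=
            Finset.sum_fiberwise univ p _
        _ = ∑ j' ∈ univ.filter (fun j' => q j' = j), ∑ i', ρ i' j' :=
            Finset.sum_comm
        _ = ∑ j' ∈ univ.filter (fun j' => q j' = j), ν' j' := by
            apply Finset.sum_congr rfl
            intro j' _
            exact hρcol j'
        _ = ν j := rfl
  have hπeq : (fun i j => ∑ i' ∈ univ.filter (fun i' => p i' = i),
      ∑ j' ∈ univ.filter (fun j' => q j' = j), π' i' j') = π := by
    funext i j
    exact (hpush i j).symm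
  refine ⟨π', ⟨hπ'plan, ?_⟩, hpush, ?_⟩
  · intro σ hσ
    rw [hcostpush π', hπeq, hcostpush σ]
    exact hπopt _ (hplanpush σ hσ)
  · intro i' j' h
    rcases (hπ0 (p i') (q j')).lt_or_eq with h' | h'
    · exact h'
    · exfalso
      rw [hπ'def] at h
      simp only [← h', zero_mul] at h
      exact lt_irrefl 0 h
end
end

section
/- Let I, J, I', J' be finite sets with surjections p : I' → I and q : J' → J. Let μ' : I' → ℝ≥0 and ν' : J' → ℝ≥0 satisfy Σ_{i'} μ'_{i'} = Σ_{j'} ν'_{j'} = 1, and define coarse weights μ_i = Σ_{i' : p(i') = i} μ'_{i'} and ν_j = Σ_{j' : q(j') = j} ν'_{j'}. Given a cost c : I × J → ℝ, define the refined cost ĉ(i', j') = c(p(i'), q(j')). If π' is an optimal transference plan for the refined transportation linear program with marginals μ', ν' and cost ĉ, then its pushforward π defined by π_{ij} = Σ_{i' : p(i') = i} Σ_{j' : q(j') = j} π'_{i'j'} is a transference plan between μ and ν with Σ_{i,j} c_{ij} π_{ij} = Σ_{i',j'} ĉ_{i'j'} π'_{i'j'}, and π is an optimal transference plan for the coarse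 transportation linear program with marginals μ, ν and cost c. -/
open Finset

noncomputable section

/-- Pushforward of an optimal refined plan: if `π'` is an optimal plan of the
refined transportation LP with cost `ĉ(i',j') = c(p i', q j')`, then its
pushforward `π` under `(p, q)` is a plan between the coarse marginals, has the
same cost, and is an optimal plan of the coarse transportation LP. -/
theorem pushforward_of_optimal_refined_plan
    {I J I' J' : Type*} [Fintype I] [Fintype J] [Fintype I'] [Fintype J']
    [DecidableEq I] [DecidableEq J]
    (p : I' → I) (q : J' → J)
    (hp : Function.Surjective p) (hq : Function.Surjective q)
    (μ' : I' → ℝ) (ν' : J' → ℝ)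
    (hμ'0 : ∀ i', 0 ≤ μ' i') (hν'0 : ∀ j', 0 ≤ ν' j')
    (hμ'1 : ∑ i', μ' i' = 1) (hν'1 : ∑ j', ν' j' = 1)
    (c : I × J → ℝ)
    (π' : I' → J' → ℝ)
    (hπ' : IsOptimalPlan μ' ν' (fun ij : I' × J' => c (p ij.1, q ij.2)) π') :
    IsPlan (fun i => ∑ i' ∈ univ.filter (fun i' => p i' = i), μ' i')
        (fun j => ∑ j' ∈ univ.filter (fun j' => q j' = j), ν' j')
        (fun i j => ∑ i' ∈ univ.filter (fun i' => p i' = i),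
          ∑ j' ∈ univ.filter (fun j' => q j' = j), π' i' j') ∧
      planCost c (fun i j => ∑ i' ∈ univ.filter (fun i' => p i' = i),
          ∑ j' ∈ univ.filter (fun j' => q j' = j), π' i' j') =
        planCost (fun ij : I' × J' => c (p ij.1, q ij.2)) π' ∧
      IsOptimalPlan (fun i => ∑ i' ∈ univ.filter (fun i' => p i' = i), μ' i')
        (fun j => ∑ j' ∈ univ.filter (fun j' => q j' = j), ν' j') c
        (fun i j => ∑ i' ∈ univ.filter (fun i' => p i' = i),
          ∑ j' ∈ univ.filter (fun j' => q j' = j), π' i' j') := by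
  obtain ⟨⟨hπ0, hrow, hcol⟩, hopt⟩ := hπ'
  set μc : I → ℝ := fun i => ∑ i' ∈ univ.filter (fun i' => p i' = i), μ' i' with hμcdef
  set νc : J → ℝ := fun j => ∑ j' ∈ univ.filter (fun j' => q j' = j), ν' j' with hνcdef
  -- general cost rearrangement
  have costEq : ∀ ρ : I' → J' → ℝ,
      (∑ i, ∑ j, c (i, j) * ∑ i' ∈ univ.filter (fun i' => p i' = i),
        ∑ j' ∈ univ.filter (fun j' => q j' = j), ρ i' j')
      = ∑ i', ∑ j', c (p i', q j') * ρ i' j' := by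
    intro ρ
    calc ∑ i, ∑ j, c (i, j) * ∑ i' ∈ univ.filter (fun i' => p i' = i),
          ∑ j' ∈ univ.filter (fun j' => q j' = j), ρ i' j'
        = ∑ i, ∑ j, ∑ i' ∈ univ.filter (fun i' => p i' = i),
            ∑ j' ∈ univ.filter (fun j' => q j' = j), c (p i', q j') * ρ i' j' := by
          refine Finset.sum_congr rfl fun i _ => Finset.sum_congr rfl fun j _ => ?_
          rw [Finset.mul_sum]
          refine Finset.sum_congr rfl fun i' hi' => ?_
          rw [Finset.mul_sum]
          refine Finset.sum_congr rfl fun j' hj' => ?_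
          simp only [Finset.mem_filter] at hi' hj'
          rw [hi'.2, hj'.2]
      _ = ∑ i, ∑ i' ∈ univ.filter (fun i' => p i' = i),
            ∑ j, ∑ j' ∈ univ.filter (fun j' => q j' = j), c (p i', q j') * ρ i' j' :=
          Finset.sum_congr rfl fun i _ => Finset.sum_comm
      _ = ∑ i, ∑ i' ∈ univ.filter (fun i' => p i' = i),
            ∑ j', c (p i', q j') * ρ i' j' := by
          refine Finset.sum_congr rfl fun i _ => Finset.sum_congr rfl fun i' _ => ?_
          exact Finset.sum_fiberwise _ _ _
      _ = ∑ i', ∑ j', c (p i', q j') * ρ i' j' := Finset.sum_fiberwise _ _ _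
  -- the pushforward is a plan
  have hplan : IsPlan μc νc (fun i j => ∑ i' ∈ univ.filter (fun i' => p i' = i),
      ∑ j' ∈ univ.filter (fun j' => q j' = j), π' i' j') := by
    refine ⟨fun i j => Finset.sum_nonneg fun i' _ => Finset.sum_nonneg fun j' _ => hπ0 i' j',
      fun i => ?_, fun j => ?_⟩
    · rw [Finset.sum_comm]
      refine Finset.sum_congr rfl fun i' _ => ?_
      rw [Finset.sum_fiberwise _ _ _, hrow i']
    · rw [show (∑ i, ∑ i' ∈ univ.filter (fun i' => p i' = i),
          ∑ j' ∈ univ.filter (fun j' => q j' = j), π' i' j')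
          = ∑ i', ∑ j' ∈ univ.filter (fun j' => q j' = j), π' i' j'
          from Finset.sum_fiberwise _ _ _, Finset.sum_comm]
      exact Finset.sum_congr rfl fun j' _ => hcol j'
  have hcost := costEq π'
  refine ⟨hplan, hcost, hplan, fun σ hσ => ?_⟩
  obtain ⟨hσ0, hσrow, hσcol⟩ := hσ
  have hμc0 : ∀ i, 0 ≤ μc i := fun i => Finset.sum_nonneg fun i' _ => hμ'0 i'
  have hνc0 : ∀ j, 0 ≤ νc j := fun j => Finset.sum_nonneg fun j' _ => hν'0 j'
  have hσμ : ∀ i j, μc i = 0 → σ i j = 0 := fun i j h =>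
    (Finset.sum_eq_zero_iff_of_nonneg (fun j _ => hσ0 i j)).1 ((hσrow i).trans h) j
      (Finset.mem_univ j)
  have hσν : ∀ i j, νc j = 0 → σ i j = 0 := fun i j h =>
    (Finset.sum_eq_zero_iff_of_nonneg (fun i _ => hσ0 i j)).1 ((hσcol j).trans h) i
      (Finset.mem_univ i)
  have hμ'z : ∀ i', μc (p i') = 0 → μ' i' = 0 := fun i' h =>
    (Finset.sum_eq_zero_iff_of_nonneg (fun k _ => hμ'0 k)).1 h i' (by simp)
  have hν'z : ∀ j', νc (q j') = 0 → ν' j' = 0 := fun j' h =>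
    (Finset.sum_eq_zero_iff_of_nonneg (fun k _ => hν'0 k)).1 h j' (by simp)
  -- refine σ
  set σ' : I' → J' → ℝ := fun i' j' =>
    σ (p i') (q j') * (μ' i' / μc (p i')) * (ν' j' / νc (q j')) with hσ'def
  have fibν : ∀ (i' : I') (j : J), (∑ j' ∈ univ.filter (fun j' => q j' = j), σ' i' j')
      = σ (p i') j * (μ' i' / μc (p i')) := by
    intro i' j
    rcases eq_or_ne (νc j) 0 with h | h
    · rw [hσν (p i') j h, zero_mul]
      refine Finset.sum_eq_zero fun j' hj' => ?_
      simp only [Finset.mem_filter] at hj'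
      rw [hσ'def]
      simp only
      rw [hν'z j' (hj'.2.symm ▸ h), zero_div, mul_zero]
    · calc (∑ j' ∈ univ.filter (fun j' => q j' = j), σ' i' j')
          = ∑ j' ∈ univ.filter (fun j' => q j' = j),
              σ (p i') j * (μ' i' / μc (p i')) * (ν' j' / νc j) := by
            refine Finset.sum_congr rfl fun j' hj' => ?_
            simp only [Finset.mem_filter] at hj'
            rw [hσ'def]
            simp only [hj'.2]
        _ = σ (p i') j * (μ' i' / μc (p i')) *
              ((∑ j' ∈ univ.filter (fun j' => q j' = j), ν' j') / νc j) := by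
            rw [Finset.sum_div, Finset.mul_sum]
        _ = σ (p i') j * (μ' i' / μc (p i')) := by
            rw [show (∑ j' ∈ univ.filter (fun j' => q j' = j), ν' j') = νc j from rfl,
              div_self h, mul_one]
  have fibμ : ∀ (j' : J') (i : I), (∑ i' ∈ univ.filter (fun i' => p i' = i), σ' i' j')
      = σ i (q j') * (ν' j' / νc (q j')) := by
    intro j' i
    rcases eq_or_ne (μc i) 0 with h | h
    · rw [hσμ i (q j') h, zero_mul]
      refine Finset.sum_eq_zero fun i' hi' => ?_
      simp only [Finset.mem_filter] at hi'
      rw [hσ'def]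
      simp only
      rw [hμ'z i' (hi'.2.symm ▸ h), zero_div, mul_zero, zero_mul]
    · calc (∑ i' ∈ univ.filter (fun i' => p i' = i), σ' i' j')
          = ∑ i' ∈ univ.filter (fun i' => p i' = i),
              σ i (q j') * (ν' j' / νc (q j')) * (μ' i' / μc i) := by
            refine Finset.sum_congr rfl fun i' hi' => ?_
            simp only [Finset.mem_filter] at hi'
            rw [hσ'def]
            simp only [hi'.2]
            ring
        _ = σ i (q j') * (ν' j' / νc (q j')) *
              ((∑ i' ∈ univ.filter (fun i' => p i' = i), μ' i') / μc i) := by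
            rw [Finset.sum_div, Finset.mul_sum]
        _ = σ i (q j') * (ν' j' / νc (q j')) := by
            rw [show (∑ i' ∈ univ.filter (fun i' => p i' = i), μ' i') = μc i from rfl,
              div_self h, mul_one]
  have hσ'plan : IsPlan μ' ν' σ' := by
    refine ⟨fun i' j' => ?_, fun i' => ?_, fun j' => ?_⟩
    · rw [hσ'def]
      have := hσ0 (p i') (q j')
      have := hμ'0 i'
      have := hν'0 j'
      have := hμc0 (p i')
      have := hνc0 (q j')
      positivity
    · rw [show (∑ j', σ' i' j') = ∑ j, ∑ j' ∈ univ.filter (fun j' => q j' = j), σ' i' j'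
        from (Finset.sum_fiberwise _ _ _).symm]
      simp_rw [fibν i']
      rw [← Finset.sum_mul, hσrow (p i')]
      rcases eq_or_ne (μc (p i')) 0 with h | h
      · rw [h, zero_mul, hμ'z i' h]
      · rw [mul_div_cancel₀ _ h]
    · rw [show (∑ i', σ' i' j') = ∑ i, ∑ i' ∈ univ.filter (fun i' => p i' = i), σ' i' j'
        from (Finset.sum_fiberwise _ _ _).symm]
      simp_rw [fibμ j']
      rw [← Finset.sum_mul, hσcol (q j')]
      rcases eq_or_ne (νc (q j')) 0 with h | h
      · rw [h, zero_mul, hν'z j' h]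
      · rw [mul_div_cancel₀ _ h]
  -- pushforward of σ' is σ
  have hpush : ∀ i j, (∑ i' ∈ univ.filter (fun i' => p i' = i),
      ∑ j' ∈ univ.filter (fun j' => q j' = j), σ' i' j') = σ i j := by
    intro i j
    simp_rw [fibν]
    calc (∑ i' ∈ univ.filter (fun i' => p i' = i), σ (p i') j * (μ' i' / μc (p i')))
        = ∑ i' ∈ univ.filter (fun i' => p i' = i), σ i j * (μ' i' / μc i) := by
          refine Finset.sum_congr rfl fun i' hi' => ?_
          simp only [Finset.mem_filter] at hi'
          rw [hi'.2]
      _ = σ i j * ((∑ i' ∈ univ.filter (fun i' => p i' = i), μ' i') / μc i) := by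
          rw [Finset.sum_div, Finset.mul_sum]
      _ = σ i j := by
          rw [show (∑ i' ∈ univ.filter (fun i' => p i' = i), μ' i') = μc i from rfl]
          rcases eq_or_ne (μc i) 0 with h | h
          · rw [hσμ i j h, zero_mul]
          · rw [div_self h, mul_one]
  -- conclude optimality
  have key := hopt σ' hσ'plan
  have hcostσ : planCost (fun ij : I' × J' => c (p ij.1, q ij.2)) σ' = planCost c σ := by
    have := costEq σ'
    rw [planCost, planCost]
    rw [← this]
    refine Finset.sum_congr rfl fun i _ => Finset.sum_congr rfl fun j _ => ?_
    rw [hpush i j]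
  calc planCost c (fun i j => ∑ i' ∈ univ.filter (fun i' => p i' = i),
        ∑ j' ∈ univ.filter (fun j' => q j' = j), π' i' j')
      = planCost (fun ij : I' × J' => c (p ij.1, q ij.2)) π' := hcost
    _ ≤ planCost (fun ij : I' × J' => c (p ij.1, q ij.2)) σ' := key
    _ = planCost c σ := hcostσ
end
end

section
/- Let n ≥ 1 and let c : Fin n × Fin n → ℝ be a cost matrix. Consider the discrete transportation linear program with uniform marginals μ_i = ν_j = 1/n for all i, j. Then the minimum of Σ_{i,j} c_{ij} π_{ij} over all transference plans π equals (1/n) · min over permutations σ of Fin n of Σ_i c_{i, σ(i)}; moreover there exists a permutation σ such that the plan π with π_{ij} = 1/n if j = σ(i) and π_{ij} = 0 otherwise is an optimal transference plan. That is, the Kantorovich optimal value coincides with the optimal value of the assignment problem, and it is attained at a (scaled) permutation matrix. -/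
open Finset

noncomputable section

lemma perm_plan_isPlan (n : ℕ) (hn : 1 ≤ n) (σ : Equiv.Perm (Fin n)) :
    IsPlan (fun _ : Fin n => 1 / (n : ℝ)) (fun _ : Fin n => 1 / (n : ℝ))
      (fun i j => if j = σ i then 1 / (n : ℝ) else 0) := by
  have hnpos : (0 : ℝ) < n := by exact_mod_cast hn
  refine ⟨fun i j => ?_, fun i => by simp, fun j => ?_⟩
  · dsimp only; split <;> positivity
  rw [Finset.sum_eq_single (σ.symm j)]
  · simp
  · intro i _ hi
    dsimp only
    rw [if_neg]
    intro h
    exact hi (by simp [h])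
  · simp

lemma perm_plan_cost (n : ℕ) (c : Fin n × Fin n → ℝ) (σ : Equiv.Perm (Fin n)) :
    planCost c (fun i j => if j = σ i then 1 / (n : ℝ) else 0)
      = (1 / (n : ℝ)) * ∑ i, c (i, σ i) := by
  unfold planCost
  rw [Finset.mul_sum]
  refine Finset.sum_congr rfl fun i _ => ?_
  rw [Finset.sum_eq_single (σ i)] <;> simp +contextual [mul_comm]

lemma plan_cost_lower (n : ℕ) (hn : 1 ≤ n) (c : Fin n × Fin n → ℝ)
    (σ₀ : Equiv.Perm (Fin n)) (hσ₀ : ∀ τ : Equiv.Perm (Fin n), ∑ i, c (i, σ₀ i) ≤ ∑ i, c (i, τ i))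
    (π : Fin n → Fin n → ℝ)
    (hπ : IsPlan (fun _ : Fin n => 1 / (n : ℝ)) (fun _ : Fin n => 1 / (n : ℝ)) π) :
    (1 / (n : ℝ)) * ∑ i, c (i, σ₀ i) ≤ planCost c π := by
  have hnpos : (0 : ℝ) < n := by exact_mod_cast hn
  set M : Matrix (Fin n) (Fin n) ℝ := fun i j => (n : ℝ) * π i j with hM
  have hMds : M ∈ doublyStochastic ℝ (Fin n) := by
    rw [mem_doublyStochastic_iff_sum]
    refine ⟨fun i j => mul_nonneg hnpos.le (hπ.1 i j), fun i => ?_, fun j => ?_⟩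
    · rw [← Finset.mul_sum, hπ.2.1 i]; field_simp
    · rw [← Finset.mul_sum, hπ.2.2 j]; field_simp
  obtain ⟨w, hw0, hw1, hwM⟩ := exists_eq_sum_perm_of_mem_doublyStochastic hMds
  have hcost : planCost c π = (1 / (n : ℝ)) * ∑ σ : Equiv.Perm (Fin n), w σ * ∑ i, c (i, σ i) := by
    have hπM : ∀ i j, π i j = (1 / (n : ℝ)) * M i j := by
      intro i j; rw [hM]; field_simp
    have hperm : ∀ (σ : Equiv.Perm (Fin n)) (i j : Fin n),
        σ.permMatrix ℝ i j = if j = σ i then (1:ℝ) else 0 := by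
      intro σ i j
      simp only [Equiv.Perm.permMatrix, PEquiv.toMatrix_apply, Equiv.toPEquiv_apply,
        Option.mem_def, Option.some.injEq]
      exact if_congr eq_comm rfl rfl
    have hMsum : ∀ i j, M i j = ∑ σ : Equiv.Perm (Fin n), w σ * σ.permMatrix ℝ i j := by
      intro i j; rw [← hwM]; simp [Matrix.sum_apply]
    unfold planCost
    calc ∑ i, ∑ j, c (i, j) * π i j
        = ∑ i, ∑ j, ∑ σ : Equiv.Perm (Fin n),
            (1 / (n : ℝ)) * (w σ * (if j = σ i then c (i, j) else 0)) := by
          refine Finset.sum_congr rfl fun i _ => Finset.sum_congr rfl fun j _ => ?_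
          rw [hπM, hMsum, Finset.mul_sum, Finset.mul_sum]
          refine Finset.sum_congr rfl fun σ _ => ?_
          rw [hperm]
          by_cases h : j = σ i <;> simp [h] <;> ring
      _ = ∑ i, ∑ σ : Equiv.Perm (Fin n), ∑ j,
            (1 / (n : ℝ)) * (w σ * (if j = σ i then c (i, j) else 0)) := by
          exact Finset.sum_congr rfl fun i _ => Finset.sum_comm
      _ = ∑ σ : Equiv.Perm (Fin n), ∑ i, ∑ j,
            (1 / (n : ℝ)) * (w σ * (if j = σ i then c (i, j) else 0)) := Finset.sum_comm
      _ = (1 / (n : ℝ)) * ∑ σ : Equiv.Perm (Fin n), w σ * ∑ i, c (i, σ i) := by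
          rw [Finset.mul_sum]
          refine Finset.sum_congr rfl fun σ _ => ?_
          simp [Finset.mul_sum, mul_ite]
  rw [hcost]
  have : ∑ σ : Equiv.Perm (Fin n), w σ * ∑ i, c (i, σ₀ i)
      ≤ ∑ σ : Equiv.Perm (Fin n), w σ * ∑ i, c (i, σ i) := by
    refine Finset.sum_le_sum fun σ _ => mul_le_mul_of_nonneg_left (hσ₀ σ) (hw0 σ)
  have h2 : ∑ σ : Equiv.Perm (Fin n), w σ * ∑ i, c (i, σ₀ i) = ∑ i, c (i, σ₀ i) := by
    rw [← Finset.sum_mul, hw1, one_mul]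
  have := h2 ▸ this
  exact mul_le_mul_of_nonneg_left this (by positivity)

/-- The discrete transportation LP with uniform marginals recovers the
assignment problem: there is a permutation `σ` whose scaled permutation matrix
is an optimal transference plan and which is optimal for the assignment
problem, and the Kantorovich optimal value equals `1/n` times the optimal value
of the assignment problem. -/
theorem transportation_recovers_assignment
    (n : ℕ) (hn : 1 ≤ n) (c : Fin n × Fin n → ℝ) :
    (∃ σ : Equiv.Perm (Fin n),
      IsOptimalPlan (fun _ : Fin n => 1 / (n : ℝ)) (fun _ : Fin n => 1 / (n : ℝ)) c
        (fun i j => if j = σ i then 1 / (n : ℝ) else 0) ∧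
      ∀ τ : Equiv.Perm (Fin n), ∑ i, c (i, σ i) ≤ ∑ i, c (i, τ i)) ∧
    sInf {r : ℝ | ∃ π : Fin n → Fin n → ℝ,
        IsPlan (fun _ : Fin n => 1 / (n : ℝ)) (fun _ : Fin n => 1 / (n : ℝ)) π ∧
        r = planCost c π} =
      (1 / (n : ℝ)) * sInf {r : ℝ | ∃ σ : Equiv.Perm (Fin n), r = ∑ i, c (i, σ i)} := by
  obtain ⟨σ₀, -, hσ₀⟩ := Finset.exists_min_image Finset.univ
    (fun σ : Equiv.Perm (Fin n) => ∑ i, c (i, σ i)) ⟨1, Finset.mem_univ _⟩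
  have hσ₀' : ∀ τ : Equiv.Perm (Fin n), ∑ i, c (i, σ₀ i) ≤ ∑ i, c (i, τ i) :=
    fun τ => hσ₀ τ (Finset.mem_univ _)
  constructor
  · refine ⟨σ₀, ⟨perm_plan_isPlan n hn σ₀, fun π' hπ' => ?_⟩, hσ₀'⟩
    rw [perm_plan_cost]
    exact plan_cost_lower n hn c σ₀ hσ₀' π' hπ'
  · have h1 : IsLeast {r : ℝ | ∃ σ : Equiv.Perm (Fin n), r = ∑ i, c (i, σ i)}
        (∑ i, c (i, σ₀ i)) := ⟨⟨σ₀, rfl⟩, by rintro r ⟨τ, rfl⟩; exact hσ₀' τ⟩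
    have h2 : IsLeast {r : ℝ | ∃ π : Fin n → Fin n → ℝ,
        IsPlan (fun _ : Fin n => 1 / (n : ℝ)) (fun _ : Fin n => 1 / (n : ℝ)) π ∧
        r = planCost c π} ((1 / (n : ℝ)) * ∑ i, c (i, σ₀ i)) := by
      constructor
      · exact ⟨_, perm_plan_isPlan n hn σ₀, (perm_plan_cost n c σ₀).symm⟩
      · rintro r ⟨π, hπ, rfl⟩
        exact plan_cost_lower n hn c σ₀ hσ₀' π hπ
    rw [h1.csInf_eq, h2.csInf_eq]
end
end
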